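/- For all n ≥ 0, the number I_{n,1} of ascending 1-Naples parking functions of length n equals Σ_{i=0}^n C_i · F_{n−i}, the n-th term of the convolution of the Catalan numbers with the Fine numbers. -/

import Mathlib

/-- The spots a car with preference `p` checks backward: `p-1, p-2, …, max(p-k,1)`. -/
def backCandidates (k p : ℕ) : List ℕ :=
  ((List.range k).map (fun i => p - (i + 1))).filter (fun s => decide (1 ≤ s))

/-- The spots a car with preference `p` checks when driving forward: `p+1, …, n`. -/
def fwdCandidates (n p : ℕ) : List ℕ :=
  List.range' (p + 1) (n - p)

/-- The spot in which a car with preference `p` parks under the `k`-Naples rule on a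
one-way street with `n` spots, given the set `occ` of already occupied spots
(`none` if the car fails to park). -/
def naplesStep (k n : ℕ) (occ : Finset ℕ) (p : ℕ) : Option ℕ :=
  if p ∈ occ then
    match (backCandidates k p).filter (fun s => decide (s ∉ occ)) with
    | s :: _ => some s
    | [] =>
      match (fwdCandidates n p).filter (fun s => decide (s ∉ occ)) with
      | s :: _ => some s
      | [] => none
  else some p

/-- Runs the `k`-Naples parking process starting from occupied set `occ` for cars with
the given list of preferences.  Returns the list of spots in which the successive cars
park, or `none` if some car fails to park. -/
def naplesSpots (k n : ℕ) : Finset ℕ → List ℕ → Option (List ℕ)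
  | _, [] => some []
  | occ, p :: rest =>
    match naplesStep k n occ p with
    | none => none
    | some s => (naplesSpots k n (insert s occ) rest).map (fun l => s :: l)

/-- All cars with the given preferences successfully park, starting from occupied set `occ`. -/
def ParksAllFrom (k n : ℕ) (occ : Finset ℕ) (prefs : List ℕ) : Prop :=
  (naplesSpots k n occ prefs).isSome

/-- A parking preference of length `n`: a list of `n` numbers in `{1, …, n}`. -/
def IsParkingPref (n : ℕ) (prefs : List ℕ) : Prop :=
  prefs.length = n ∧ ∀ p ∈ prefs, 1 ≤ p ∧ p ≤ n

/-- A `k`-Naples parking function of length `n`. -/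
def IsNaplesPF (k n : ℕ) (prefs : List ℕ) : Prop :=
  IsParkingPref n prefs ∧ ParksAllFrom k n ∅ prefs

/-- `numAsc n k` is `I_{n,k}`, the number of ascending `k`-Naples parking functions of
length `n` (note `numAsc 0 k = 1`, the empty preference). -/
noncomputable def numAsc (n k : ℕ) : ℕ :=
  Set.ncard {f : List ℕ | IsNaplesPF k n f ∧ List.Pairwise (· ≤ ·) f}

/-- `numAscOne n k` is `U_{n,k}`, the number of ascending `k`-Naples parking functions of
length `n` whose first entry is `1` (note `numAscOne 0 k = 0`). -/
noncomputable def numAscOne (n k : ℕ) : ℕ :=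
  Set.ncard {f : List ℕ | IsNaplesPF k n f ∧ List.Pairwise (· ≤ ·) f ∧ f.head? = some 1}

/-! For `k = 1`, an ascending preference list parks exactly when, at every stage, the occupied
spots form an initial segment `1, …, i`: the next car either takes spot `i + 1` (preferring any
spot between the previous preference and `i + 1`), or two consecutive cars both prefer `i + 2`
and the second backs into `i + 1`. Counting these continuations by the distance `d` from the last
preference to the first free spot gives generating functions with
`Y_d = 1 + x (Y_1 + ⋯ + Y_{d+1}) + x² Y_1`. This system has a unique solution, and since
`x C² = C - 1` it is `Y_d = C^(d+1) F`; in particular `Σ I_{n,1} xⁿ = Y_0 = C F`. -/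

open Finset

lemma List.Pairwise.head_le_of_mem {α : Type*} [Preorder α] {a x : α} {l : List α}
    (h : (a :: l).Pairwise (· ≤ ·)) (hx : x ∈ a :: l) : a ≤ x := by
  rcases List.mem_cons.1 hx with rfl | hx
  exacts [le_rfl, List.rel_of_pairwise_cons h hx]

section NaplesStep

variable {k n : ℕ} {occ : Finset ℕ} {p s : ℕ}

lemma mem_backCandidates : s ∈ backCandidates k p ↔ 1 ≤ s ∧ p - k ≤ s ∧ s < p := by
  simp only [backCandidates, List.mem_filter, List.mem_map, List.mem_range, decide_eq_true_eq]
  constructor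
  · rintro ⟨⟨j, hj, rfl⟩, hs⟩
    omega
  · rintro ⟨hs1, hks, hsp⟩
    exact ⟨⟨p - s - 1, by omega, by omega⟩, hs1⟩

lemma naplesStep_of_notMem (hp : p ∉ occ) : naplesStep k n occ p = some p := by
  simp [naplesStep, hp]

lemma naplesStep_of_pred_notMem (hk : 0 < k) (hp : 1 ≤ p) (hsucc : p + 1 ∈ occ)
    (hpred : p ∉ occ) :
    naplesStep k n occ (p + 1) = some p := by
  obtain ⟨k, rfl⟩ := Nat.exists_eq_add_of_lt hk
  have hback : backCandidates (0 + k + 1) (p + 1) =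
      p :: ((List.range k).map (fun i => p + 1 - (i + 2))).filter (fun s => decide (1 ≤ s)) := by
    rw [backCandidates, zero_add, List.range_succ_eq_map, List.map_cons, List.map_map,
      List.filter_cons_of_pos (by simpa using hp)]
    rfl
  rw [naplesStep, if_pos hsucc, hback, List.filter_cons_of_pos (by simpa using hpred)]

lemma naplesStep_of_forward (hp : p ∈ occ) (hback : ∀ b ∈ backCandidates k p, b ∈ occ)
    (hps : p < s) (hsn : s ≤ n) (hs : s ∉ occ) (hbetween : ∀ j, p < j → j < s → j ∈ occ) :
    naplesStep k n occ p = some s := by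
  obtain ⟨d, rfl⟩ := Nat.exists_eq_add_of_lt hps
  have hfwd : fwdCandidates n p =
      List.range' (p + 1) d ++ (p + d + 1) :: List.range' (p + d + 2) (n - (p + d + 1)) := by
    have hlen : n - p = d + (n - (p + d + 1) + 1) := by omega
    rw [fwdCandidates, hlen, ← List.range'_append_1, List.range'_succ, Nat.add_right_comm p 1 d]
  have hnil : (backCandidates k p).filter (fun b => decide (b ∉ occ)) = [] :=
    List.filter_eq_nil_iff.2 fun b hb => by simp [hback b hb]
  have hfirst : (List.range' (p + 1) d).filter (fun b => decide (b ∉ occ)) = [] :=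
    List.filter_eq_nil_iff.2 fun j hj => by
      rw [List.mem_range'_1] at hj
      simp [hbetween j (by omega) (by omega)]
  rw [naplesStep, if_pos hp, hnil, hfwd, List.filter_append, hfirst, List.nil_append,
    List.filter_cons_of_pos (by simpa using hs)]

lemma naplesStep_spec (h : naplesStep k n occ p = some s) :
    s ∉ occ ∧ p - k ≤ s ∧ (1 ≤ p → 1 ≤ s) ∧ (p ≤ n → s ≤ n) := by
  unfold naplesStep at h
  split_ifs at h with hp
  · split at h
    · rename_i hb
      have hmem : s ∈ (backCandidates k p).filter (fun b => decide (b ∉ occ)) := by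
        rw [hb, Option.some_inj.1 h.symm]; exact List.mem_cons_self
      rw [List.mem_filter, mem_backCandidates, decide_eq_true_eq] at hmem
      obtain ⟨⟨hs1, hks, hsp⟩, hocc⟩ := hmem
      exact ⟨hocc, hks, fun _ => hs1, fun _ => by omega⟩
    · split at h
      · rename_i hf
        have hmem : s ∈ (fwdCandidates n p).filter (fun b => decide (b ∉ occ)) := by
          rw [hf, Option.some_inj.1 h.symm]; exact List.mem_cons_self
        rw [List.mem_filter, fwdCandidates, List.mem_range'_1, decide_eq_true_eq] at hmem
        obtain ⟨⟨hps, hsn⟩, hocc⟩ := hmem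
        exact ⟨hocc, by omega, fun _ => by omega, fun _ => by omega⟩
      · simp at h
  · cases h
    exact ⟨hp, by omega, id, id⟩

end NaplesStep

section ParksAllFrom

variable {k n : ℕ} {occ : Finset ℕ} {p s : ℕ} {l : List ℕ}

lemma parksAllFrom_nil : ParksAllFrom k n occ [] := rfl

lemma parksAllFrom_cons_iff :
    ParksAllFrom k n occ (p :: l) ↔
      ∃ s, naplesStep k n occ p = some s ∧ ParksAllFrom k n (insert s occ) l := by
  unfold ParksAllFrom
  rw [naplesSpots]
  cases naplesStep k n occ p <;> simp

lemma parksAllFrom_cons_of_naplesStep (h : naplesStep k n occ p = some s) :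
    ParksAllFrom k n occ (p :: l) ↔ ParksAllFrom k n (insert s occ) l := by
  simp [parksAllFrom_cons_iff, h]

-- A car preferring a spot beyond `g + k` never takes the free spot `g`.
lemma not_parksAllFrom_of_gap {g : ℕ} (hg : g ∈ Icc 1 n) (hocc : occ ⊆ (Icc 1 n).erase g)
    (hl : ∀ p ∈ l, g + k < p ∧ p ≤ n) (hcard : n ≤ occ.card + l.length) :
    ¬ ParksAllFrom k n occ l := by
  induction l generalizing occ with
  | nil =>
    have := card_le_card hocc
    rw [card_erase_of_mem hg, Nat.card_Icc] at this
    rw [mem_Icc] at hg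
    simp only [List.length_nil] at hcard
    omega
  | cons p l ih =>
    rw [parksAllFrom_cons_iff]
    rintro ⟨s, hs, hpark⟩
    obtain ⟨hsocc, hps, hs1, hsn⟩ := naplesStep_spec hs
    obtain ⟨hgp, hpn⟩ := hl p List.mem_cons_self
    refine ih (insert_subset ?_ hocc) (fun q hq => hl q (List.mem_cons_of_mem p hq)) ?_ hpark
    · rw [mem_erase, mem_Icc]
      omega
    · rw [card_insert_of_notMem hsocc]
      simp only [List.length_cons] at hcard
      omega

end ParksAllFrom

section Prefix

variable {n i w : ℕ} {t : List ℕ}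

lemma naplesStep_one_Icc (hw1 : 1 ≤ w) (hw : w ≤ i + 1) (hin : i < n) :
    naplesStep 1 n (Icc 1 i) w = some (i + 1) := by
  rcases hw.lt_or_eq with hw | rfl
  · refine naplesStep_of_forward (by simp; omega) (fun b hb => ?_) (by omega) hin (by simp)
      (fun j hwj hji => by simp; omega)
    rw [mem_backCandidates] at hb
    simp only [mem_Icc]
    omega
  · exact naplesStep_of_notMem (by simp)

lemma parksAllFrom_Icc_cons (hw1 : 1 ≤ w) (hw : w ≤ i + 1) (hin : i < n) :
    ParksAllFrom 1 n (Icc 1 i) (w :: t) ↔ ParksAllFrom 1 n (Icc 1 (i + 1)) t := by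
  rw [parksAllFrom_cons_of_naplesStep (naplesStep_one_Icc hw1 hw hin),
    insert_Icc_right_eq_Icc_add_one (by omega)]

lemma parksAllFrom_Icc_cons_cons :
    ParksAllFrom 1 n (Icc 1 i) ((i + 2) :: (i + 2) :: t) ↔
      ParksAllFrom 1 n (Icc 1 (i + 2)) t := by
  have hfill : insert (i + 1) (insert (i + 2) (Icc 1 i)) = Icc 1 (i + 2) := by
    ext a
    simp only [mem_insert, mem_Icc]
    omega
  rw [parksAllFrom_cons_of_naplesStep (naplesStep_of_notMem (by simp)),
    parksAllFrom_cons_of_naplesStep (naplesStep_of_pred_notMem (by norm_num) (by omega)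
      (mem_insert_self _ _) (by simp)), hfill]

lemma not_parksAllFrom_Icc_of_gap {l : List ℕ} (hl : ∀ x ∈ l, i + 3 ≤ x ∧ x ≤ n) (hin : i < n)
    (hlen : i + l.length = n) : ¬ ParksAllFrom 1 n (Icc 1 i) l :=
  not_parksAllFrom_of_gap (g := i + 1) (by simp; omega) (fun a ha => by simp at ha ⊢; omega)
    (fun x hx => by have := hl x hx; omega) (by simp; omega)

lemma not_parksAllFrom_Icc_cons_of_gap (ht : ∀ x ∈ t, i + 3 ≤ x ∧ x ≤ n) (hin : i + 2 ≤ n)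
    (hlen : i + t.length + 1 = n) : ¬ ParksAllFrom 1 n (Icc 1 i) ((i + 2) :: t) := by
  rw [parksAllFrom_cons_of_naplesStep (naplesStep_of_notMem (by simp))]
  refine not_parksAllFrom_of_gap (g := i + 1) (by simp; omega)
    (fun a ha => by simp at ha ⊢; omega) (fun x hx => by have := ht x hx; omega) ?_
  rw [card_insert_of_notMem (by simp), Nat.card_Icc]
  omega

end Prefix

/-- The ascending continuations `l` of a `1`-Naples run that has filled exactly the spots
`1, …, i`, the last preference having been `v`. -/
def IsAscTail (n i v : ℕ) (l : List ℕ) : Prop :=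
  (v :: l).Pairwise (· ≤ ·) ∧ (∀ x ∈ l, x ≤ n) ∧ i + l.length = n ∧ ParksAllFrom 1 n (Icc 1 i) l

lemma isAscTail_nil_iff {n i v : ℕ} : IsAscTail n i v [] ↔ i = n := by
  simp [IsAscTail, parksAllFrom_nil]

section IsAscTail

variable {n i v w : ℕ} {t : List ℕ}

lemma IsAscTail.cons_of_le (hv1 : 1 ≤ v) (hvw : v ≤ w) (hwi : w ≤ i + 1)
    (ht : IsAscTail n (i + 1) w t) : IsAscTail n i v (w :: t) := by
  obtain ⟨hsort, hle, hlen, hpark⟩ := ht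
  refine ⟨hsort.cons_cons_of_trans hvw, List.forall_mem_cons.2 ⟨by omega, hle⟩,
    by simp only [List.length_cons]; omega, ?_⟩
  exact (parksAllFrom_Icc_cons (hv1.trans hvw) hwi (by omega)).2 hpark

lemma IsAscTail.cons_cons (hv : v ≤ i + 2) (ht : IsAscTail n (i + 2) (i + 2) t) :
    IsAscTail n i v ((i + 2) :: (i + 2) :: t) := by
  obtain ⟨hsort, hle, hlen, hpark⟩ := ht
  refine ⟨(hsort.cons_cons_of_trans le_rfl).cons_cons_of_trans hv, ?_,
    by simp only [List.length_cons]; omega, parksAllFrom_Icc_cons_cons.2 hpark⟩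
  simpa [List.forall_mem_cons] using ⟨by omega, hle⟩

lemma IsAscTail.cons_cases (hv1 : 1 ≤ v) (h : IsAscTail n i v (w :: t)) :
    (v ≤ w ∧ w ≤ i + 1 ∧ IsAscTail n (i + 1) w t) ∨
      (w = i + 2 ∧ ∃ t', t = (i + 2) :: t' ∧ IsAscTail n (i + 2) (i + 2) t') := by
  obtain ⟨hsort, hle, hlen, hpark⟩ := h
  rw [List.pairwise_cons_cons_iff_of_trans] at hsort
  obtain ⟨hvw, hsort⟩ := hsort
  have hwn : w ≤ n := hle w List.mem_cons_self
  have htn : ∀ x ∈ t, x ≤ n := fun x hx => hle x (List.mem_cons_of_mem w hx)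
  have hwt : ∀ x ∈ w :: t, w ≤ x := fun x hx => hsort.head_le_of_mem hx
  simp only [List.length_cons] at hlen
  by_cases hwi : w ≤ i + 1
  · rw [parksAllFrom_Icc_cons (by omega) hwi (by omega)] at hpark
    exact Or.inl ⟨hvw, hwi, hsort, htn, by omega, hpark⟩
  by_cases hw3 : i + 3 ≤ w
  · exact absurd hpark (not_parksAllFrom_Icc_of_gap
      (fun x hx => ⟨hw3.trans (hwt x hx), hle x hx⟩) (by omega) (by simpa using hlen))
  obtain rfl : w = i + 2 := by omega
  rcases t with _ | ⟨w', t'⟩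
  · exact absurd hpark (not_parksAllFrom_Icc_cons_of_gap (by simp) hwn (by simpa using hlen))
  simp only [List.length_cons] at hlen
  by_cases hw' : w' = i + 2
  · subst hw'
    rw [parksAllFrom_Icc_cons_cons] at hpark
    rw [List.pairwise_cons_cons_iff_of_trans] at hsort
    exact Or.inr ⟨rfl, t', rfl, hsort.2, fun x hx => htn x (List.mem_cons_of_mem _ hx),
      by omega, hpark⟩
  · have hw'3 : i + 3 ≤ w' := by
      have := hwt w' (List.mem_cons_of_mem _ List.mem_cons_self)
      omega
    exact absurd hpark (not_parksAllFrom_Icc_cons_of_gap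
      (fun x hx => ⟨hw'3.trans (hsort.of_cons.head_le_of_mem hx), htn x hx⟩) hwn (by omega))

/-- After the spots `1, …, i` are filled, the next car either takes spot `i + 1`, or two cars
preferring `i + 2` fill `i + 2` and then `i + 1`; any other choice leaves `i + 1` empty forever. -/
lemma isAscTail_cons_iff (hv1 : 1 ≤ v) (hv : v ≤ i + 2) :
    IsAscTail n i v (w :: t) ↔
      (v ≤ w ∧ w ≤ i + 1 ∧ IsAscTail n (i + 1) w t) ∨
        (w = i + 2 ∧ ∃ t', t = (i + 2) :: t' ∧ IsAscTail n (i + 2) (i + 2) t') := by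
  refine ⟨IsAscTail.cons_cases hv1, ?_⟩
  rintro (⟨hvw, hwi, ht⟩ | ⟨rfl, t', rfl, ht'⟩)
  exacts [ht.cons_of_le hv1 hvw hwi, ht'.cons_cons hv]

end IsAscTail

/-- `ascCount m d` counts the ascending tails of `m` cars whose last preference lies `d` spots
below the first free spot (see `card_ascTails`). -/
def ascCount : ℕ → ℕ → ℕ
  | 0, _ => 1
  | 1, d => ∑ j ∈ range (d + 1), ascCount 0 (j + 1)
  | m + 2, d => (∑ j ∈ range (d + 1), ascCount (m + 1) (j + 1)) + ascCount m 1

def ascTails : ℕ → ℕ → ℕ → Finset (List ℕ)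
  | 0, _, _ => {[]}
  | 1, i, v => (Icc v (i + 1)).biUnion fun w => (ascTails 0 (i + 1) w).image (w :: ·)
  | m + 2, i, v =>
    ((Icc v (i + 1)).biUnion fun w => (ascTails (m + 1) (i + 1) w).image (w :: ·)) ∪
      (ascTails m (i + 2) (i + 2)).image fun t => (i + 2) :: (i + 2) :: t

lemma mem_ascTails_succ {m i v : ℕ} {l : List ℕ} :
    l ∈ ascTails (m + 1) i v ↔
      (∃ w ∈ Icc v (i + 1), ∃ t ∈ ascTails m (i + 1) w, l = w :: t) ∨
        (∃ m', m = m' + 1 ∧ ∃ t ∈ ascTails m' (i + 2) (i + 2), l = (i + 2) :: (i + 2) :: t) := by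
  rcases m with _ | m <;> simp [ascTails, eq_comm]

lemma IsAscTail.length_eq {n i v : ℕ} {l : List ℕ} (h : IsAscTail n i v l) : i + l.length = n :=
  h.2.2.1

lemma mem_ascTails_iff {n : ℕ} : ∀ {m i v : ℕ} {l : List ℕ}, 1 ≤ v → v ≤ i + 2 → i + m = n →
    (l ∈ ascTails m i v ↔ IsAscTail n i v l)
  | 0, i, v, l, _, _, hm => by
    rcases l with _ | ⟨w, t⟩
    · simp [ascTails, isAscTail_nil_iff, ← hm]
    · simp only [ascTails, mem_singleton, reduceCtorEq, false_iff]
      intro h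
      have := h.length_eq
      simp only [List.length_cons] at this
      omega
  | m + 1, i, v, l, hv1, hv, hm => by
    rcases l with _ | ⟨w, t⟩
    · simp only [mem_ascTails_succ, reduceCtorEq, and_false, exists_const, false_or, false_iff]
      intro h
      have := h.length_eq
      simp only [List.length_nil] at this
      omega
    rw [mem_ascTails_succ, isAscTail_cons_iff hv1 hv]
    constructor
    · rintro (⟨w', hw', t', ht', h⟩ | ⟨m', rfl, t', ht', h⟩) <;> simp only [List.cons.injEq] at h
      · obtain ⟨rfl, rfl⟩ := h
        rw [mem_Icc] at hw'
        exact Or.inl ⟨hw'.1, hw'.2, (mem_ascTails_iff (by omega) (by omega) (by omega)).1 ht'⟩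
      · obtain ⟨rfl, rfl⟩ := h
        exact Or.inr ⟨rfl, t', rfl, (mem_ascTails_iff (by omega) (by omega) (by omega)).1 ht'⟩
    · rintro (⟨hvw, hwi, ht⟩ | ⟨rfl, t', rfl, ht'⟩)
      · exact Or.inl ⟨w, mem_Icc.2 ⟨hvw, hwi⟩, t,
          (mem_ascTails_iff (by omega) (by omega) (by omega)).2 ht, rfl⟩
      · have hlen := ht'.length_eq
        refine Or.inr ⟨t'.length, by omega, t', ?_, rfl⟩
        exact (mem_ascTails_iff (by omega) (by omega) (by omega)).2 ht'

lemma sum_Icc_eq_sum_range_reflect {M : Type*} [AddCommMonoid M] (f : ℕ → M) {v a : ℕ}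
    (hv : v ≤ a) : ∑ w ∈ Icc v a, f (a + 1 - w) = ∑ j ∈ range (a - v + 1), f (j + 1) := by
  refine sum_nbij' (fun w => a - w) (fun j => a - j) ?_ ?_ ?_ ?_ fun w hw => ?_ <;>
    simp only [mem_Icc, mem_range] at *
  · exact fun w hw => by omega
  · exact fun j hj => by omega
  · exact fun w hw => by omega
  · exact fun j hj => by omega
  · congr 1
    omega

lemma card_biUnion_cons {m i v : ℕ} (hv : v ≤ i + 1)
    (ih : ∀ w ∈ Icc v (i + 1), (ascTails m (i + 1) w).card = ascCount m (i + 2 - w)) :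
    ((Icc v (i + 1)).biUnion fun w => (ascTails m (i + 1) w).image (w :: ·)).card =
      ∑ j ∈ range (i + 1 - v + 1), ascCount m (j + 1) := by
  rw [card_biUnion, ← sum_Icc_eq_sum_range_reflect _ hv]
  · refine sum_congr rfl fun w hw => ?_
    rw [card_image_of_injective _ List.cons_injective, ih w hw]
  · intro w _ w' _ hne
    simp only [Function.onFun, disjoint_left, mem_image]
    rintro _ ⟨t, -, rfl⟩ ⟨t', -, h⟩
    exact hne (List.cons.inj h).1.symm

lemma card_ascTails : ∀ {m i v : ℕ}, v ≤ i + 1 → (ascTails m i v).card = ascCount m (i + 1 - v)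
  | 0, i, v, _ => rfl
  | 1, i, v, hv => by
    rw [ascTails, ascCount, card_biUnion_cons hv fun w hw => by
      rw [mem_Icc] at hw; rw [card_ascTails (by omega)]]
  | m + 2, i, v, hv => by
    rw [ascTails, ascCount, card_union_of_disjoint, card_biUnion_cons hv fun w hw => by
      rw [mem_Icc] at hw; rw [card_ascTails (by omega)],
      card_image_of_injective _ fun t t' h => by simpa using h, card_ascTails (by omega)]
    · congr 2
      omega
    · simp only [disjoint_left, mem_biUnion, mem_image, mem_Icc]
      rintro _ ⟨w, hw, t, -, rfl⟩ ⟨t', -, h⟩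
      have := (List.cons.inj h).1
      omega

lemma isAscTail_zero_one_iff {n : ℕ} {l : List ℕ} :
    IsAscTail n 0 1 l ↔ IsNaplesPF 1 n l ∧ l.Pairwise (· ≤ ·) := by
  simp only [IsAscTail, IsNaplesPF, IsParkingPref, List.pairwise_cons, zero_add,
    Icc_eq_empty_of_lt zero_lt_one]
  constructor
  · rintro ⟨⟨h1, hsort⟩, hn, hlen, hpark⟩
    exact ⟨⟨⟨hlen, fun p hp => ⟨h1 p hp, hn p hp⟩⟩, hpark⟩, hsort⟩
  · rintro ⟨⟨⟨hlen, hp⟩, hpark⟩, hsort⟩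
    exact ⟨⟨fun p h => (hp p h).1, hsort⟩, fun p h => (hp p h).2, hlen, hpark⟩

lemma numAsc_one_eq_ascCount (n : ℕ) : numAsc n 1 = ascCount n 0 := by
  have hset : {f : List ℕ | IsNaplesPF 1 n f ∧ f.Pairwise (· ≤ ·)} = ascTails n 0 1 := by
    ext l
    rw [Set.mem_ofPred_eq, mem_coe, mem_ascTails_iff le_rfl (by norm_num) (zero_add n),
      isAscTail_zero_one_iff]
  rw [numAsc, hset, Set.ncard_coe_finset, card_ascTails le_rfl]

open PowerSeries

section Series

variable {R : Type*} [CommRing R]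

def TailRecurrence (Y : ℕ → R⟦X⟧) : Prop :=
  ∀ d, Y d = 1 + X * ∑ j ∈ range (d + 1), Y (j + 1) + X ^ 2 * Y 1

-- The difference of two solutions is divisible by every power of `X`.
lemma TailRecurrence.unique {Y Z : ℕ → R⟦X⟧} (hY : TailRecurrence Y) (hZ : TailRecurrence Z) :
    Y = Z := by
  have hdiff : ∀ d, Y d - Z d =
      X * (∑ j ∈ range (d + 1), (Y (j + 1) - Z (j + 1)) + X * (Y 1 - Z 1)) := fun d => by
    rw [hY d, hZ d, sum_sub_distrib]
    ring
  have hdvd : ∀ m d, X ^ m ∣ Y d - Z d := by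
    intro m
    induction m with
    | zero => simp
    | succ m ih =>
      intro d
      rw [hdiff d, pow_succ']
      exact mul_dvd_mul_left X
        (dvd_add (dvd_sum fun j _ => ih (j + 1)) (dvd_mul_of_dvd_right (ih 1) X))
  funext d
  ext m
  rw [← sub_eq_zero, ← map_sub]
  exact X_pow_dvd_iff.1 (hdvd (m + 1) d) m m.lt_succ_self

lemma tailRecurrence_ascCount :
    TailRecurrence fun d => PowerSeries.mk fun m => (ascCount m d : R) := by
  intro d
  ext m
  rcases m with _ | _ | m <;> simp [ascCount, coeff_X_pow_mul', coeff_succ_X_mul, map_sum]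

lemma mk_catalan_eq_one_add_X_mul_sq : (PowerSeries.mk fun m => (catalan m : R)) =
    1 + X * (PowerSeries.mk fun m => (catalan m : R)) ^ 2 := by
  have hmap : map (Nat.castRingHom R) catalanSeries = PowerSeries.mk fun m => (catalan m : R) := by
    ext m
    simp [catalanSeries_coeff]
  have := congrArg (map (Nat.castRingHom R)) catalanSeries_sq_mul_X_add_one
  rw [map_add, map_mul, map_pow, map_X, map_one, hmap] at this
  linear_combination -this

section CatalanEquation

variable {C : R⟦X⟧}

lemma X_mul_sum_pow_succ (hC : C = 1 + X * C ^ 2) (d : ℕ) :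
    X * ∑ j ∈ range (d + 1), C ^ (j + 1) = X * C + C ^ d - 1 := by
  induction d with
  | zero => simp
  | succ d ih =>
    rw [sum_range_succ, mul_add, ih]
    linear_combination (-C ^ d) * hC

lemma tailRecurrence_pow_mul (hC : C = 1 + X * C ^ 2) {G : R⟦X⟧}
    (hG : G * (1 - (X + X ^ 2) * C) = 1) :
    TailRecurrence fun d => C ^ d * G := by
  intro d
  simp only [← sum_mul]
  linear_combination (-G) * X_mul_sum_pow_succ hC d + hG

lemma mul_one_sub_X_add_X_sq_mul (hC : C = 1 + X * C ^ 2) {F : R⟦X⟧}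
    (hF : F * (1 - X ^ 2 * C ^ 2) = 1) :
    C * F * (1 - (X + X ^ 2) * C) = 1 := by
  linear_combination hF + F * hC

end CatalanEquation

end Series

/-- For all `n ≥ 0`, the number `I_{n,1}` of ascending `1`-Naples parking
functions of length `n` equals `Σ_{i=0}^n C_i · F_{n-i}`, the `n`-th term of the convolution
of the Catalan numbers with the Fine numbers, where the Fine numbers are defined by the
generating function identity `F(x)·(1 − x²C(x)²) = 1`. -/
theorem statement12 (F : ℕ → ℤ)
    (hF : PowerSeries.mk F *
        (1 - PowerSeries.X ^ 2 * (PowerSeries.mk fun m => (catalan m : ℤ)) ^ 2) = 1)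
    (n : ℕ) :
    (numAsc n 1 : ℤ) = ∑ i ∈ Finset.range (n + 1), (catalan i : ℤ) * F (n - i) := by
  have hseries := congrFun (tailRecurrence_ascCount.unique
    (tailRecurrence_pow_mul mk_catalan_eq_one_add_X_mul_sq
      (mul_one_sub_X_add_X_sq_mul mk_catalan_eq_one_add_X_mul_sq hF))) 0
  have hcoeff := congrArg (coeff n) hseries
  rw [pow_zero, one_mul, coeff_mk, coeff_mul, Nat.sum_antidiagonal_eq_sum_range_succ_mk] at hcoeff
  simpa [numAsc_one_eq_ascCount, coeff_mk] using hcoeff
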